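/- Let E be a set of equations, each of the form X = t with X a variable and t a term, let V♭ be a set of variables, and let ζ be a substitution such that Xζ is ground for every X ∈ V♭. If η is a unifier of Eζ, then for every variable Y ∈ downwards(E, V♭), the term Y(ζ∘η) is ground. -/

import Mathlib

open scoped Classical

/-- First-order terms over a set `F` of function symbols, with variables drawn from `ℕ`. -/
inductive Tm (F : Type) : Type
  | var : ℕ → Tm F
  | app : F → List (Tm F) → Tm F

namespace Tm

/-- Applying a substitution (a map from variables to terms) to a term. -/
def subst {F : Type} : Tm F → (ℕ → Tm F) → Tm F
  | var x, θ => θ x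
  | app f ts, θ => app f (ts.attach.map fun t => t.1.subst θ)
  decreasing_by
    have := List.sizeOf_lt_of_mem t.2
    simp only [Tm.app.sizeOf_spec]
    omega

/-- The set of variables occurring in a term. -/
def vars {F : Type} : Tm F → Set ℕ
  | var x => {x}
  | app _ ts => ⋃ t : {x // x ∈ ts}, t.1.vars
  decreasing_by
    have := List.sizeOf_lt_of_mem t.2
    simp only [Tm.app.sizeOf_spec]
    omega

/-- A term is ground if it contains no variables. -/
def Ground {F : Type} (t : Tm F) : Prop := t.vars = ∅

end Tm

/-- Substitutions are maps from variables to terms (finite support is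
    imposed separately by `Subst.IsSubst`). -/
abbrev Subst (F : Type) := ℕ → Tm F

namespace Subst

variable {F : Type}

/-- The domain of a substitution. -/
def dom (θ : Subst F) : Set ℕ := {x | θ x ≠ Tm.var x}

/-- A genuine substitution is the identity on all but finitely many variables. -/
def IsSubst (θ : Subst F) : Prop := (dom θ).Finite

/-- The range variables of a substitution. -/
def rang (θ : Subst F) : Set ℕ := ⋃ x ∈ dom θ, (θ x).vars

/-- vars(θ) = dom(θ) ∪ rang(θ). -/
def svars (θ : Subst F) : Set ℕ := dom θ ∪ rang θ

/-- Composition: `X (comp θ σ) = (X θ) σ`. -/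
def comp (θ σ : Subst F) : Subst F := fun x => (θ x).subst σ

/-- Restriction of a substitution to a set of variables. -/
noncomputable def restrict (θ : Subst F) (V : Set ℕ) : Subst F :=
  fun x => if x ∈ V then θ x else Tm.var x

/-- A renaming is a substitution mapping its domain injectively to variables. -/
def IsRenaming (ρ : Subst F) : Prop :=
  IsSubst ρ ∧ (∀ x, ∃ y, ρ x = Tm.var y) ∧ Set.InjOn ρ (dom ρ)

/-- Two substitutions are equivalent modulo renaming. -/
def EquivMod (σ θ : Subst F) : Prop :=
  ∃ δ ρ, IsRenaming δ ∧ IsRenaming ρ ∧ σ = comp θ δ ∧ θ = comp σ ρ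

/-- `μ` is a unifier of the terms `s` and `t`. -/
def Unifier (μ : Subst F) (s t : Tm F) : Prop :=
  IsSubst μ ∧ s.subst μ = t.subst μ

/-- Two terms unify if they have a unifier. -/
def Unify (s t : Tm F) : Prop := ∃ μ, Unifier μ s t

/-- `μ` is a most general unifier of the terms `s` and `t`. -/
def IsMGU (μ : Subst F) (s t : Tm F) : Prop :=
  Unifier μ s t ∧ ∀ τ, Unifier τ s t → ∃ δ, IsSubst δ ∧ τ = comp μ δ

/-- The image of a set of variables under a renaming: `Vρ = {Xρ | X ∈ V}`. -/
def varImage (ρ : Subst F) (V : Set ℕ) : Set ℕ := {y | ∃ x ∈ V, ρ x = Tm.var y}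

/-- The substitution `φρ`, whose bindings are `{Xρ ↦ tρ | X ↦ t a binding of φ}`. -/
noncomputable def renameSubst (φ ρ : Subst F) : Subst F := fun y =>
  if h : ∃ x, x ∈ dom φ ∧ ρ x = Tm.var y then (φ h.choose).subst ρ else Tm.var y

/-- `μ` is a unifier of a set of equations (pairs of terms). -/
def EqUnifier (μ : Subst F) (E : Set (Tm F × Tm F)) : Prop :=
  IsSubst μ ∧ ∀ e ∈ E, e.1.subst μ = e.2.subst μ

/-- `μ` is a most general unifier of a set of equations. -/
def EqIsMGU (μ : Subst F) (E : Set (Tm F × Tm F)) : Prop :=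
  EqUnifier μ E ∧ ∀ τ, EqUnifier τ E → ∃ δ, IsSubst δ ∧ τ = comp μ δ

/-- Applying a substitution to a set of equations. -/
def eqSubst (E : Set (Tm F × Tm F)) (θ : Subst F) : Set (Tm F × Tm F) :=
  (fun e => (e.1.subst θ, e.2.subst θ)) '' E

/-- `downwards(E, S) = S ∪ ⋃ {vars(t) | (X = t) ∈ E with X ∈ S}`. -/
def downwards (E : Set (Tm F × Tm F)) (S : Set ℕ) : Set ℕ :=
  S ∪ {y | ∃ x t, (Tm.var x, t) ∈ E ∧ x ∈ S ∧ y ∈ Tm.vars t}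

/-- `upwards(E, S) = S ∪ {X | (X = t) ∈ E and vars(t) ⊆ S}`. -/
def upwards (E : Set (Tm F × Tm F)) (S : Set ℕ) : Set ℕ :=
  S ∪ {x | ∃ t, (Tm.var x, t) ∈ E ∧ Tm.vars t ⊆ S}

end Subst

/-! If `η` unifies `Eζ` then `ζ∘η` unifies `E`. For an equation `X = t` with `X ∈ V♭`, the term
`X(ζ∘η)` is ground and equals `t(ζ∘η)`, so every variable of `t` is mapped to a ground term. -/

namespace Tm

variable {F : Type}

theorem subst_var (x : ℕ) (θ : Subst F) : (var x).subst θ = θ x := by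
  rw [subst]

theorem subst_app (f : F) (ts : List (Tm F)) (θ : Subst F) :
    (app f ts).subst θ = app f (ts.map (·.subst θ)) := by
  rw [subst]
  exact congrArg _ (List.attach_map_val (f := fun t : Tm F => t.subst θ))

theorem vars_app (f : F) (ts : List (Tm F)) : (app f ts).vars = ⋃ t ∈ ts, t.vars := by
  rw [vars, Set.iUnion_subtype]

theorem vars_subst (θ : Subst F) : ∀ t : Tm F, (t.subst θ).vars = ⋃ x ∈ t.vars, (θ x).vars
  | var x => by simp [subst_var, vars]
  | app f ts => by
    have ih : ∀ t ∈ ts, (t.subst θ).vars = ⋃ x ∈ t.vars, (θ x).vars :=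
      fun t _ => vars_subst θ t
    simp only [subst_app, vars_app, List.mem_map, Set.iUnion_exists, Set.biUnion_and',
      Set.iUnion_iUnion_eq_right, Set.biUnion_iUnion]
    exact Set.iUnion₂_congr ih

theorem subst_subst (θ σ : Subst F) :
    ∀ t : Tm F, (t.subst θ).subst σ = t.subst (Subst.comp θ σ)
  | var x => by rw [subst_var, subst_var]; rfl
  | app f ts => by
    simp only [subst_app, List.map_map]
    congr 1
    exact List.map_congr_left fun t _ => subst_subst θ σ t

theorem ground_subst_iff {θ : Subst F} {t : Tm F} :
    (t.subst θ).Ground ↔ ∀ x ∈ t.vars, (θ x).Ground := by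
  simp [Ground, vars_subst]

theorem Ground.subst {t : Tm F} (ht : t.Ground) (θ : Subst F) : (t.subst θ).Ground :=
  ground_subst_iff.2 fun x hx => absurd (ht ▸ hx) (Set.notMem_empty x)

end Tm

namespace Subst

variable {F : Type}

theorem EqUnifier.subst_comp_eq {η ζ : Subst F} {E : Set (Tm F × Tm F)}
    (hη : EqUnifier η (eqSubst E ζ)) {e : Tm F × Tm F} (he : e ∈ E) :
    e.1.subst (comp ζ η) = e.2.subst (comp ζ η) := by
  rw [← Tm.subst_subst, ← Tm.subst_subst]
  exact hη.2 _ ⟨e, he, rfl⟩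

theorem ground_of_mem_downwards {σ : Subst F} {E : Set (Tm F × Tm F)} {S : Set ℕ}
    (hσ : ∀ e ∈ E, e.1.subst σ = e.2.subst σ) (hS : ∀ X ∈ S, (σ X).Ground) :
    ∀ Y ∈ downwards E S, (σ Y).Ground := by
  rintro Y (hY | ⟨X, t, hXt, hX, hYt⟩)
  · exact hS Y hY
  · have ht : (t.subst σ).Ground := by
      rw [← hσ _ hXt, Tm.subst_var]
      exact hS X hX
    exact Tm.ground_subst_iff.1 ht Y hYt

end Subst

theorem stmt9_general {F : Type} (E : Set (Tm F × Tm F))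
    (Vb : Set ℕ) (ζ : Subst F)
    (hground : ∀ X ∈ Vb, (ζ X).Ground)
    (η : Subst F) (hη : Subst.EqUnifier η (Subst.eqSubst E ζ)) :
    ∀ Y ∈ Subst.downwards E Vb, (Subst.comp ζ η Y).Ground :=
  Subst.ground_of_mem_downwards (fun _ he => hη.subst_comp_eq he)
    fun X hX => (hground X hX).subst η

/-- for `E` a set of equations of the form `X = t` and `ζ` with
`Xζ` ground for every `X ∈ V♭`, if `η` unifies `Eζ` then `Y(ζ∘η)` is ground
for every `Y ∈ downwards(E, V♭)`. -/
theorem stmt9 {F : Type} (E : Set (Tm F × Tm F))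
    (hE : ∀ e ∈ E, ∃ x : ℕ, e.1 = Tm.var x)
    (Vb : Set ℕ) (ζ : Subst F) (hζ : Subst.IsSubst ζ)
    (hground : ∀ X ∈ Vb, (ζ X).Ground)
    (η : Subst F) (hη : Subst.EqUnifier η (Subst.eqSubst E ζ)) :
    ∀ Y ∈ Subst.downwards E Vb, (Subst.comp ζ η Y).Ground :=
  stmt9_general E Vb ζ hground η hη
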